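/- For every integer n ≥ 2, the graph G_{4n} contains no induced subgraph isomorphic to P_2 + P_4; that is, G_{4n} is (P_2 + P_4)-free. -/

import Mathlib

/-- `P₂ + P₄`: the disjoint union of a path on two vertices (`0 – 1`)
and a path on four vertices (`2 – 3 – 4 – 5`). -/
def P2P4 : SimpleGraph (Fin 6) where
  Adj u v := (u = 0 ∧ v = 1) ∨ (u = 1 ∧ v = 0) ∨
             (u = 2 ∧ v = 3) ∨ (u = 3 ∧ v = 2) ∨
             (u = 3 ∧ v = 4) ∨ (u = 4 ∧ v = 3) ∨
             (u = 4 ∧ v = 5) ∨ (u = 5 ∧ v = 4)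
  symm := ⟨by intro u v; revert u v; decide⟩
  loopless := ⟨by intro u; revert u; decide⟩

/-- The residue modulo `4` of an element of `ZMod (4 * n)`. -/
def res4 (n : ℕ) (u : ZMod (4 * n)) : ZMod 4 :=
  ZMod.castHom (dvd_mul_right 4 n) (ZMod 4) u

/-- The graph `G_{4n}` on vertex set `ZMod (4n)`: two distinct vertices `u`, `v` are
adjacent iff `v = u + 1`, or `u = v + 1`, or the residues of `u` and `v` modulo `4`
are `1` and `3` in some order. (It is obtained from the cycle `C_{4n}` by joining
every vertex `≡ 1 (mod 4)` to every vertex `≡ 3 (mod 4)`.) -/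
def G4 (n : ℕ) : SimpleGraph (ZMod (4 * n)) where
  Adj u v := u ≠ v ∧
    (v = u + 1 ∨ u = v + 1 ∨
      (res4 n u = 1 ∧ res4 n v = 3) ∨ (res4 n u = 3 ∧ res4 n v = 1))
  symm := by
    constructor
    rintro u v ⟨h, h2⟩
    exact ⟨h.symm, by tauto⟩
  loopless := ⟨fun u h => h.1 rfl⟩

lemma zmod4_cases : ∀ r : ZMod 4, r ≠ 1 → r ≠ 3 → r = 0 ∨ r = 2 := by decide

lemma zmod4_key : ∀ r : ZMod 4, r = 0 ∨ r = 2 →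
    ((r + 1 = 1 ∧ r - 1 = 3) ∨ (r + 1 = 3 ∧ r - 1 = 1)) := by decide

lemma zmod4_step : ∀ r s : ZMod 4, r ≠ 1 → r ≠ 3 → s ≠ 1 → s ≠ 3 → s = r + 1 → False := by
  decide

lemma zmod4_adj : ∀ r s : ZMod 4, (r = 1 ∨ r = 3) → (s = 1 ∨ s = 3) → s = r + 1 → False := by
  decide

instance : DecidableRel P2P4.Adj := fun u v =>
  decidable_of_iff ((u = 0 ∧ v = 1) ∨ (u = 1 ∧ v = 0) ∨
             (u = 2 ∧ v = 3) ∨ (u = 3 ∧ v = 2) ∨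
             (u = 3 ∧ v = 4) ∨ (u = 4 ∧ v = 3) ∨
             (u = 4 ∧ v = 5) ∨ (u = 5 ∧ v = 4)) Iff.rfl

lemma res4_add_one (n : ℕ) (u : ZMod (4 * n)) : res4 n (u + 1) = res4 n u + 1 := by
  unfold res4; rw [map_add, map_one]

lemma res4_sub_one (n : ℕ) (u : ZMod (4 * n)) : res4 n (u - 1) = res4 n u - 1 := by
  unfold res4; rw [map_sub, map_one]

lemma center_odd {n : ℕ} (hn : 2 ≤ n) {d c e : ZMod (4 * n)}
    (hdc : (G4 n).Adj d c) (hde : (G4 n).Adj d e) (hce : c ≠ e)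
    (hnadj : ¬ (G4 n).Adj c e) :
    res4 n d = 1 ∨ res4 n d = 3 := by
  haveI : NeZero (4 * n) := ⟨by omega⟩
  by_contra h
  push_neg at h
  obtain ⟨h1, h3⟩ := h
  have hr := zmod4_cases _ h1 h3
  have hk := zmod4_key _ hr
  have htwo : (d + 1) ≠ (d - 1) := by
    intro he
    have h2 : ((2 : ℕ) : ZMod (4 * n)) = 0 := by
      push_cast
      linear_combination he
    have hd := (ZMod.natCast_eq_zero_iff 2 (4 * n)).1 h2
    have := Nat.le_of_dvd (by norm_num) hd
    omega
  have hform : ∀ x : ZMod (4 * n), (G4 n).Adj d x → x = d + 1 ∨ x = d - 1 := by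
    rintro x ⟨-, hx | hx | hx | hx⟩
    · exact Or.inl hx
    · right; rw [hx]; ring
    · exact absurd hx.1 h1
    · exact absurd hx.1 h3
  have hadj : (G4 n).Adj (d + 1) (d - 1) := by
    refine ⟨htwo, Or.inr (Or.inr ?_)⟩
    rw [res4_add_one, res4_sub_one]
    exact hk
  rcases hform c hdc with hc | hc <;> rcases hform e hde with hev | hev
  · exact hce (hc.trans hev.symm)
  · rw [hc, hev] at hnadj; exact hnadj hadj
  · rw [hc, hev] at hnadj; exact hnadj hadj.symm
  · exact hce (hc.trans hev.symm)

/-- For every `n ≥ 2`, the graph `G_{4n}` is `(P₂ + P₄)`-free. -/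
theorem G4_P2P4_free (n : ℕ) (hn : 2 ≤ n) : IsEmpty (P2P4 ↪g G4 n) := by
  constructor
  intro f
  have adj : ∀ u v : Fin 6, P2P4.Adj u v → (G4 n).Adj (f u) (f v) :=
    fun u v h => f.map_rel_iff.2 h
  have nadj : ∀ u v : Fin 6, ¬ P2P4.Adj u v → ¬ (G4 n).Adj (f u) (f v) :=
    fun u v h ha => h (f.map_rel_iff.1 ha)
  have hne : ∀ u v : Fin 6, u ≠ v → f u ≠ f v :=
    fun u v h e => h (f.injective e)
  have h3 : res4 n (f 3) = 1 ∨ res4 n (f 3) = 3 :=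
    center_odd hn (adj 3 2 (by decide)) (adj 3 4 (by decide)) (hne 2 4 (by decide))
      (nadj 2 4 (by decide))
  have h4 : res4 n (f 4) = 1 ∨ res4 n (f 4) = 3 :=
    center_odd hn (adj 4 3 (by decide)) (adj 4 5 (by decide)) (hne 3 5 (by decide))
      (nadj 3 5 (by decide))
  have h34 : (res4 n (f 3) = 1 ∧ res4 n (f 4) = 3) ∨
      (res4 n (f 3) = 3 ∧ res4 n (f 4) = 1) := by
    obtain ⟨-, hc | hc | hc | hc⟩ := adj 3 4 (by decide)
    · exact absurd ((res4_add_one n (f 3)) ▸ congrArg (res4 n) hc)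
        (fun h => zmod4_adj _ _ h3 h4 h)
    · exact absurd ((res4_add_one n (f 4)) ▸ congrArg (res4 n) hc)
        (fun h => zmod4_adj _ _ h4 h3 h)
    · exact Or.inl hc
    · exact Or.inr hc
  have hend : ∀ u : Fin 6, u = 0 ∨ u = 1 → res4 n (f u) ≠ 1 ∧ res4 n (f u) ≠ 3 := by
    intro u hu
    have nadj3 : ¬ (G4 n).Adj (f u) (f 3) := by
      rcases hu with rfl | rfl
      · exact nadj 0 3 (by decide)
      · exact nadj 1 3 (by decide)
    have nadj4 : ¬ (G4 n).Adj (f u) (f 4) := by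
      rcases hu with rfl | rfl
      · exact nadj 0 4 (by decide)
      · exact nadj 1 4 (by decide)
    have hne3 : f u ≠ f 3 := by
      rcases hu with rfl | rfl
      · exact hne 0 3 (by decide)
      · exact hne 1 3 (by decide)
    have hne4 : f u ≠ f 4 := by
      rcases hu with rfl | rfl
      · exact hne 0 4 (by decide)
      · exact hne 1 4 (by decide)
    constructor
    · intro h1
      rcases h34 with ⟨_, h43⟩ | ⟨h33, _⟩
      · exact nadj4 ⟨hne4, Or.inr (Or.inr (Or.inl ⟨h1, h43⟩))⟩
      · exact nadj3 ⟨hne3, Or.inr (Or.inr (Or.inl ⟨h1, h33⟩))⟩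
    · intro h1
      rcases h34 with ⟨h31, _⟩ | ⟨_, h41⟩
      · exact nadj3 ⟨hne3, Or.inr (Or.inr (Or.inr ⟨h1, h31⟩))⟩
      · exact nadj4 ⟨hne4, Or.inr (Or.inr (Or.inr ⟨h1, h41⟩))⟩
  obtain ⟨h01, h03⟩ := hend 0 (Or.inl rfl)
  obtain ⟨h11, h13⟩ := hend 1 (Or.inr rfl)
  obtain ⟨-, hc | hc | hc | hc⟩ := adj 0 1 (by decide)
  · exact zmod4_step _ _ h01 h03 h11 h13 ((res4_add_one n (f 0)) ▸ congrArg (res4 n) hc)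
  · exact zmod4_step _ _ h11 h13 h01 h03 ((res4_add_one n (f 1)) ▸ congrArg (res4 n) hc)
  · exact h01 hc.1
  · exact h03 hc.1
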